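/- Let (T, T̃) be a pair of densely defined operators with common dense domain on a complex Hilbert space H satisfying (T1) and (T2), and let [u | v] := ⟨T₁u, v⟩ − ⟨u, T̃₁v⟩ be the boundary form on the graph space W. Then: (i) [u | v] equals the complex conjugate of [v | u] for all u, v ∈ W; and (ii) for u ∈ W one has [u | v] = 0 for all v ∈ W if and only if u ∈ W₀; that is, the kernel of the boundary operator D : W → W′, Du := [u | ·], equals W₀. -/

import Mathlib

/-!
By (T1)–(T2), `T + T̃` is a bounded symmetric operator on a dense domain, so it extends to a
bounded symmetric `C` on `H`, and `T₁ u + T̃₁ u = C u` on `W`; this gives (i) at once and also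
shows `dom T* ⊆ dom T̃*`. Hence `[u | ·]` vanishes on `W` iff `(u, T₁ u)` lies in the adjoint of
the graph of `T*`, which is the double adjoint of the graph of `T`, i.e. its closure. Since
`T̄ ≤ T̃* = T₁`, that means exactly `u ∈ dom T̄`.
-/

open LinearPMap
open scoped LinearPMap

noncomputable section

variable {H : Type*} [NormedAddCommGroup H] [InnerProductSpace ℂ H] [CompleteSpace H]

local notation "⟪" x ", " y "⟫" => @inner ℂ _ _ x y

/-- Conditions (T1)–(T2) for a pair of operators with common dense domain. -/
structure IsPreFriedrichsPair (T Tt : H →ₗ.[ℂ] H) : Prop where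
  dom_eq : T.domain = Tt.domain
  dense' : Dense (T.domain : Set H)
  t1 : ∀ (φ : T.domain) (ψ : Tt.domain), ⟪T φ, (ψ : H)⟫ = ⟪(φ : H), Tt ψ⟫
  t2 : ∃ c : ℝ, 0 < c ∧ ∀ φ : (T + Tt).domain, ‖(T + Tt) φ‖ ≤ c * ‖(φ : H)‖

/-- A joint pair of abstract Friedrichs operators: (T1)–(T3). -/
structure IsFriedrichsPair (T Tt : H →ₗ.[ℂ] H) extends IsPreFriedrichsPair T Tt : Prop where
  t3 : ∃ μ₀ : ℝ, 0 < μ₀ ∧ ∀ φ : (T + Tt).domain,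
        2 * μ₀ * ‖(φ : H)‖ ^ 2 ≤ (⟪(T + Tt) φ, (φ : H)⟫).re

namespace Submodule

variable {𝕜 E F : Type*} [RCLike 𝕜] [NormedAddCommGroup E] [InnerProductSpace 𝕜 E]
  [NormedAddCommGroup F] [InnerProductSpace 𝕜 F]

theorem isClosed_adjoint (g : Submodule 𝕜 (E × F)) : IsClosed (g.adjoint : Set (F × E)) := by
  rw [Submodule.adjoint, map_coe, LinearEquiv.coe_coe, LinearEquiv.image_eq_preimage_symm]
  exact (isClosed_orthogonal _).preimage (WithLp.prod_continuous_toLp _ _ _)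

theorem le_adjoint_adjoint (g : Submodule 𝕜 (E × F)) : g ≤ g.adjoint.adjoint := by
  refine fun x hx => (mem_adjoint_iff _ x).2 fun a b hab => ?_
  have h := (mem_adjoint_iff g (a, b)).1 hab x.1 x.2 hx
  calc inner 𝕜 b x.1 - inner 𝕜 a x.2 = -(starRingEnd 𝕜) (inner 𝕜 x.2 a - inner 𝕜 x.1 b) := by
        rw [_root_.map_sub, inner_conj_symm, inner_conj_symm, neg_sub]
    _ = 0 := by rw [h, _root_.map_zero, neg_zero]

theorem adjoint_adjoint_le [CompleteSpace E] [CompleteSpace F] (g : Submodule 𝕜 (E × F)) :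
    g.adjoint.adjoint ≤ g.topologicalClosure := by
  intro x hx
  let G : Submodule 𝕜 (WithLp 2 (E × F)) :=
    g.comap (WithLp.linearEquiv 2 𝕜 (E × F)).toLinearMap
  have hxG : WithLp.toLp 2 x ∈ Gᗮᗮ := by
    refine (mem_orthogonal _ _).2 fun z hz => ?_
    have hz' : (z.ofLp.2, -z.ofLp.1) ∈ g.adjoint := by
      refine (mem_adjoint_iff g _).2 fun a b hab => ?_
      have := (mem_orthogonal G z).1 hz (WithLp.toLp 2 (a, b)) hab
      rw [WithLp.prod_inner_apply] at this
      simp only [inner_neg_right]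
      linear_combination this
    have := (mem_adjoint_iff _ x).1 hx _ _ hz'
    rw [WithLp.prod_inner_apply]
    simp only [inner_neg_left] at this
    linear_combination -this
  rw [orthogonal_orthogonal_eq_closure, ← SetLike.mem_coe, topologicalClosure_coe] at hxG
  rw [← SetLike.mem_coe, topologicalClosure_coe]
  exact map_mem_closure (WithLp.prod_continuous_ofLp 2 E F) hxG fun p hp => hp

theorem adjoint_adjoint [CompleteSpace E] [CompleteSpace F] (g : Submodule 𝕜 (E × F)) :
    g.adjoint.adjoint = g.topologicalClosure :=
  le_antisymm g.adjoint_adjoint_le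
    (topologicalClosure_minimal _ g.le_adjoint_adjoint g.adjoint.isClosed_adjoint)

end Submodule

namespace LinearPMap

variable {𝕜 E F : Type*} [RCLike 𝕜] [NormedAddCommGroup E] [InnerProductSpace 𝕜 E]
  [NormedAddCommGroup F] [InnerProductSpace 𝕜 F]

theorem mem_graph_iff_mem_domain_of_le {A B : E →ₗ.[𝕜] F} (h : A ≤ B) (u : B.domain) :
    ((u : E), B u) ∈ A.graph ↔ (u : E) ∈ A.domain := by
  refine ⟨mem_domain_of_mem_graph, fun hu => ?_⟩
  rw [← h.2 (x := ⟨u, hu⟩) rfl]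
  exact A.mem_graph ⟨u, hu⟩

theorem IsClosable.closure_le_of_isClosed {A B : E →ₗ.[𝕜] F} (hA : A.IsClosable)
    (hB : B.IsClosed) (h : A ≤ B) : A.closure ≤ B := by
  refine le_of_le_graph ?_
  rw [← hA.graph_closure_eq_closure_graph]
  exact Submodule.topologicalClosure_minimal _ (le_graph_of_le h) hB

theorem IsClosable.mem_graph_closure_iff [CompleteSpace E] [CompleteSpace F] {T : E →ₗ.[𝕜] F}
    (hT : Dense (T.domain : Set E)) (hc : T.IsClosable) (x : E × F) :
    x ∈ T.closure.graph ↔ ∀ v : T†.domain, inner 𝕜 (T† v) x.1 = inner 𝕜 (v : F) x.2 := by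
  rw [← hc.graph_closure_eq_closure_graph, ← Submodule.adjoint_adjoint,
    ← adjoint_graph_eq_graph_adjoint hT, Submodule.mem_adjoint_iff]
  simp [mem_graph_iff, sub_eq_zero]

theorem IsFormalAdjoint.add_isFormalAdjoint_add {T S : E →ₗ.[𝕜] E} (h : T.IsFormalAdjoint S) :
    (T + S).IsFormalAdjoint (T + S) := by
  intro x y
  rw [add_apply T S x, add_apply T S y, inner_add_left, inner_add_right,
    h ⟨x, x.2.1⟩ ⟨y, y.2.2⟩, h.symm ⟨x, x.2.2⟩ ⟨y, y.2.1⟩]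
  exact add_comm _ _

theorem exists_isSymmetric_extension [CompleteSpace E] {S : E →ₗ.[𝕜] E}
    (hS : Dense (S.domain : Set E)) (hsym : S.IsFormalAdjoint S) {c : ℝ}
    (hc : ∀ x : S.domain, ‖S x‖ ≤ c * ‖(x : E)‖) :
    ∃ C : E →L[𝕜] E, (C : E →ₗ[𝕜] E).IsSymmetric ∧ ∀ x : S.domain, C x = S x := by
  let C := (S.toFun.mkContinuous c hc).extend S.domain.subtypeL
  have hCS : ∀ x : S.domain, C x = S x :=
    ContinuousLinearMap.extend_eq _ hS.denseRange_val
      isUniformEmbedding_subtype_val.isUniformInducing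
  refine ⟨C, fun x y => ?_, hCS⟩
  have : (fun p : E × E => inner 𝕜 (C p.1) p.2) = fun p => inner 𝕜 p.1 (C p.2) := by
    refine Continuous.ext_on (hS.prod hS) (by fun_prop) (by fun_prop) ?_
    rintro ⟨x, y⟩ ⟨hx, hy⟩
    simpa [hCS ⟨x, hx⟩, hCS ⟨y, hy⟩] using hsym ⟨x, hx⟩ ⟨y, hy⟩
  exact congrFun this (x, y)

end LinearPMap

namespace IsPreFriedrichsPair

variable {T Tt : H →ₗ.[ℂ] H}

theorem exists_isSymmetric_extension_add (hF : IsPreFriedrichsPair T Tt) :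
    ∃ C : H →L[ℂ] H, (C : H →ₗ[ℂ] H).IsSymmetric ∧ ∀ x : (T + Tt).domain, C x = (T + Tt) x := by
  obtain ⟨c, -, hc⟩ := hF.t2
  have hdom : (T + Tt).domain = T.domain := by rw [add_domain, ← hF.dom_eq, inf_idem]
  exact exists_isSymmetric_extension (hdom ▸ hF.dense')
    (IsFormalAdjoint.add_isFormalAdjoint_add hF.t1) hc

section BoundedExtension

variable {C : H →L[ℂ] H}

theorem inner_sub_adjoint_eq (hF : IsPreFriedrichsPair T Tt) (hC : (C : H →ₗ[ℂ] H).IsSymmetric)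
    (hCT : ∀ x : (T + Tt).domain, C x = (T + Tt) x) (y : (T†).domain) (x : Tt.domain) :
    ⟪C y - (T†) y, (x : H)⟫ = ⟪(y : H), Tt x⟫ := by
  have hxT : (x : H) ∈ T.domain := by rw [hF.dom_eq]; exact x.2
  rw [inner_sub_left, hC.apply_clm, hCT ⟨x, hxT, x.2⟩, LinearPMap.add_apply,
    adjoint_isFormalAdjoint hF.dense' y ⟨x, hxT⟩, inner_add_right]
  ring

theorem domain_adjoint_le (hF : IsPreFriedrichsPair T Tt) (hC : (C : H →ₗ[ℂ] H).IsSymmetric)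
    (hCT : ∀ x : (T + Tt).domain, C x = (T + Tt) x) : (T†).domain ≤ (Tt†).domain :=
  fun y hy => mem_adjoint_domain_of_exists y ⟨_, hF.inner_sub_adjoint_eq hC hCT ⟨y, hy⟩⟩

theorem adjoint_add_adjoint (hF : IsPreFriedrichsPair T Tt) (hC : (C : H →ₗ[ℂ] H).IsSymmetric)
    (hCT : ∀ x : (T + Tt).domain, C x = (T + Tt) x) (u₁ : (Tt†).domain) (u₂ : (T†).domain)
    (hu : (u₁ : H) = u₂) : (Tt†) u₁ + (T†) u₂ = C u₁ := by
  rw [adjoint_apply_eq (hF.dom_eq ▸ hF.dense') u₁ (x₀ := C u₂ - (T†) u₂)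
    (hu ▸ hF.inner_sub_adjoint_eq hC hCT u₂), hu, sub_add_cancel]

end BoundedExtension

theorem le_adjoint (hF : IsPreFriedrichsPair T Tt) : T ≤ Tt† :=
  IsFormalAdjoint.le_adjoint (hF.dom_eq ▸ hF.dense') (IsFormalAdjoint.symm hF.t1)

theorem isClosable (hF : IsPreFriedrichsPair T Tt) : T.IsClosable :=
  (adjoint_isClosed (hF.dom_eq ▸ hF.dense')).isClosable.leIsClosable hF.le_adjoint

theorem closure_le_adjoint (hF : IsPreFriedrichsPair T Tt) : T.closure ≤ Tt† :=
  hF.isClosable.closure_le_of_isClosed (adjoint_isClosed (hF.dom_eq ▸ hF.dense')) hF.le_adjoint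

theorem boundary_form_conj_symm (hF : IsPreFriedrichsPair T Tt)
    (u₁ : (Tt†).domain) (u₂ : (T†).domain) (hu : (u₁ : H) = u₂)
    (v₁ : (Tt†).domain) (v₂ : (T†).domain) (hv : (v₁ : H) = v₂) :
    ⟪(Tt†) u₁, (v₁ : H)⟫ - ⟪(u₁ : H), (T†) v₂⟫ =
      (starRingEnd ℂ) (⟪(Tt†) v₁, (u₁ : H)⟫ - ⟪(v₁ : H), (T†) u₂⟫) := by
  obtain ⟨C, hC, hCT⟩ := hF.exists_isSymmetric_extension_add
  have hsum : ⟪(Tt†) u₁ + (T†) u₂, (v₁ : H)⟫ = ⟪(u₁ : H), (Tt†) v₁ + (T†) v₂⟫ := by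
    rw [hF.adjoint_add_adjoint hC hCT u₁ u₂ hu, hF.adjoint_add_adjoint hC hCT v₁ v₂ hv,
      hC.apply_clm]
  rw [inner_add_left, inner_add_right] at hsum
  rw [_root_.map_sub, inner_conj_symm, inner_conj_symm]
  linear_combination hsum

theorem boundary_form_eq_zero_iff (hF : IsPreFriedrichsPair T Tt) (u₁ : (Tt†).domain) :
    (∀ (v₁ : (Tt†).domain) (v₂ : (T†).domain), (v₁ : H) = (v₂ : H) →
        ⟪(Tt†) u₁, (v₁ : H)⟫ - ⟪(u₁ : H), (T†) v₂⟫ = 0) ↔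
      (u₁ : H) ∈ T.closure.domain := by
  obtain ⟨C, hC, hCT⟩ := hF.exists_isSymmetric_extension_add
  have hconj (v : (T†).domain) :
      ⟪(Tt†) u₁, (v : H)⟫ - ⟪(u₁ : H), (T†) v⟫ = 0 ↔ ⟪(T†) v, (u₁ : H)⟫ = ⟪(v : H), (Tt†) u₁⟫ := by
    rw [sub_eq_zero, ← inner_conj_symm, ← inner_conj_symm (u₁ : H),
      (starRingEnd ℂ).injective.eq_iff, eq_comm]
  calc _ ↔ ∀ v : (T†).domain, ⟪(T†) v, (u₁ : H)⟫ = ⟪(v : H), (Tt†) u₁⟫ := by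
        refine ⟨fun h v => (hconj v).1 (h ⟨v, hF.domain_adjoint_le hC hCT v.2⟩ v rfl),
          fun h v₁ v₂ hv => ?_⟩
        rw [hv]
        exact (hconj v₂).2 (h v₂)
    _ ↔ ((u₁ : H), (Tt†) u₁) ∈ T.closure.graph :=
        (hF.isClosable.mem_graph_closure_iff hF.dense' ((u₁ : H), (Tt†) u₁)).symm
    _ ↔ _ := mem_graph_iff_mem_domain_of_le hF.closure_le_adjoint u₁

end IsPreFriedrichsPair

/-- Here `T₁ = Tt†` and `T̃₁ = T†`; an element of `W` appears as a pair of elements of the two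
adjoint domains carrying the same vector of `H`. -/
theorem statement2 (T Tt : H →ₗ.[ℂ] H) (hF : IsPreFriedrichsPair T Tt) :
    (∀ (u₁ : (Tt†).domain) (u₂ : (T†).domain), (u₁ : H) = (u₂ : H) →
      ∀ (v₁ : (Tt†).domain) (v₂ : (T†).domain), (v₁ : H) = (v₂ : H) →
        ⟪(Tt†) u₁, (v₁ : H)⟫ - ⟪(u₁ : H), (T†) v₂⟫ =
          (starRingEnd ℂ) (⟪(Tt†) v₁, (u₁ : H)⟫ - ⟪(v₁ : H), (T†) u₂⟫)) ∧
    (∀ u₁ : (Tt†).domain,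
      ((∀ (v₁ : (Tt†).domain) (v₂ : (T†).domain), (v₁ : H) = (v₂ : H) →
          ⟪(Tt†) u₁, (v₁ : H)⟫ - ⟪(u₁ : H), (T†) v₂⟫ = 0) ↔
        (u₁ : H) ∈ T.closure.domain)) :=
  ⟨hF.boundary_form_conj_symm, hF.boundary_form_eq_zero_iff⟩
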